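/- arXiv:1907.12634 — 2 statements merged into one kernel-verified Lean document; each statement's English description precedes it below -/
import Mathlib

section
/- For every non-negative integer t and every positive integer a, every graph G of treewidth at most t admits a set Z ⊆ V(G) chosen from a probability distribution in which each vertex appears with probability at most 1/a, such that the treedepth of G − Z is always at most 2^{t(t+1)/2+1}·a^t. In other words, the class of graphs of treewidth at most t is fractionally td-fragile at rate r(a) = 2^{t(t+1)/2+1} a^t. -/
/-- `le` is the (reflexive) ancestor order of a rooted forest on the vertices of
`G` in which every edge of `G` joins a vertex to an ancestor or descendant:
it is a partial order whose principal down-sets are chains, and every edge of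
`G` is comparable. -/
def IsForestOrder {V : Type} (G : SimpleGraph V) (le : V → V → Prop) : Prop :=
  Reflexive le ∧ Transitive le ∧ AntiSymmetric le ∧
    (∀ v x y, le x v → le y v → le x y ∨ le y x) ∧
    ∀ ⦃u v : V⦄, G.Adj u v → le u v ∨ le v u

/-- `G` has treedepth at most `n`: there is a rooted forest of depth at most
`n - 1` on `V(G)` (each vertex has at most `n` ancestors, itself included)
whose ancestor-descendant pairs cover all edges of `G`. -/
def TreedepthLE {V : Type} (G : SimpleGraph V) (n : ℕ) : Prop :=
  ∃ le : V → V → Prop, IsForestOrder G le ∧ ∀ v, {u | le u v}.ncard ≤ n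

/-- The treedepth of `G`. -/
noncomputable def treedepth {V : Type} (G : SimpleGraph V) : ℕ :=
  sInf {n | TreedepthLE G n}

/-- A tree decomposition of a graph `G`. -/
structure TreeDecomp {V : Type} (G : SimpleGraph V) where
  /-- index type of the decomposition tree -/
  ι : Type
  /-- the decomposition tree -/
  t : SimpleGraph ι
  tree : t.IsTree
  /-- the bags of the decomposition -/
  bag : ι → Set V
  mem_bag : ∀ v : V, ∃ i, v ∈ bag i
  edge_bag : ∀ ⦃u v : V⦄, G.Adj u v → ∃ i, u ∈ bag i ∧ v ∈ bag i
  bag_connected : ∀ v : V, (t.induce {i | v ∈ bag i}).Connected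

/-- `G` has treewidth at most `k`: there is a tree decomposition all of whose
bags have at most `k + 1` vertices. -/
def TreewidthLE {V : Type} (G : SimpleGraph V) (k : ℕ) : Prop :=
  ∃ D : TreeDecomp G, ∀ i, (D.bag i).ncard ≤ k + 1

/-!
Root a tree decomposition of width `t` and rank the vertices by the depth of their highest bag.
The parent of `v` in the *guardian forest* is the highest-ranked vertex preceding `v` in the
highest bag of `v`; every bag is then a chain of this forest. Deleting the forest levels
congruent to a uniformly random `s` modulo `2a` hits each vertex with probability `1/(2a)` and
cuts the forest into segments of fewer than `2a` levels. Contracting every segment to its root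
gives a graph of width `t - 1`: in each bag the highest-ranked vertex and its parent are either
merged or one of them is deleted. By induction, deleting a random set of segments, each with
probability at most `1/(2a)`, leaves treedepth at most `r(t - 1, 2a)` in the contraction, and
expanding the segments back multiplies the depth by `2a`. So the rate `r` (`fragilityRate`)
satisfies `r(t, a) = 2a · r(t - 1, 2a) = 2^(t(t+1)/2) a^t`. For the expansion to stay a forest
order, each order produced by the induction refines the guardian forest of the level above.
-/

open scoped ENNReal

lemma PMF.toOuterMeasure_apply_le_one {α : Type*} (p : PMF α) (A : Set α) :
    p.toOuterMeasure A ≤ 1 :=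
  (p.toOuterMeasure.mono (Set.subset_univ A)).trans_eq
    ((p.toOuterMeasure_apply_eq_one_iff _).2 (Set.subset_univ _))

lemma PMF.toOuterMeasure_bind_uniformOfFinset_apply {α β : Type*} (I : Finset α)
    (hI : I.Nonempty) (f : α → PMF β) (A : Set β) :
    ((PMF.uniformOfFinset I hI).bind f).toOuterMeasure A =
      (I.card : ℝ≥0∞)⁻¹ * ∑ i ∈ I, (f i).toOuterMeasure A := by
  rw [PMF.toOuterMeasure_bind_apply, tsum_eq_sum (s := I) fun i hi => by
    rw [PMF.uniformOfFinset_apply_of_notMem _ hi, zero_mul], Finset.mul_sum]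
  exact Finset.sum_congr rfl fun i hi => by rw [PMF.uniformOfFinset_apply_of_mem hI hi]

lemma PMF.sum_toReal_eq_one {α : Type*} [Fintype α] (p : PMF α) : ∑ x, (p x).toReal = 1 := by
  rw [← ENNReal.toReal_sum fun x _ => p.apply_ne_top x, ← ENNReal.toReal_one, ← p.tsum_coe,
    tsum_fintype]

lemma PMF.sum_filter_toReal {α : Type*} [Fintype α] (p : PMF α) (q : α → Prop)
    [DecidablePred q] :
    ∑ x ∈ Finset.univ.filter q, (p x).toReal = (p.toOuterMeasure {x | q x}).toReal := by
  rw [← ENNReal.toReal_sum fun x _ => p.apply_ne_top x, ← p.toOuterMeasure_apply_finset]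
  simp

lemma Nat.exists_mod_eq_of_lt {b s : ℕ} (hs : s < b) (m : ℕ) :
    ∃ d, m ≤ d ∧ d < m + b ∧ d % b = s := by
  obtain ⟨q, r, hr, rfl⟩ : ∃ q r, r < b ∧ m = b * q + r :=
    ⟨m / b, m % b, Nat.mod_lt _ (by omega), (Nat.div_add_mod m b).symm⟩
  rcases le_or_gt r s with h | h
  · exact ⟨b * q + s, by omega, by omega, by rw [Nat.mul_add_mod, Nat.mod_eq_of_lt hs]⟩
  · refine ⟨b * (q + 1) + s, by rw [mul_add]; omega, by rw [mul_add]; omega, ?_⟩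
    rw [Nat.mul_add_mod, Nat.mod_eq_of_lt hs]

lemma exists_injective_le_imp_le {W : Type} [Finite W] (f : W → ℕ) :
    ∃ g : W → ℕ, Function.Injective g ∧ ∀ u v, g u ≤ g v → f u ≤ f v := by
  obtain ⟨n, ⟨e⟩⟩ := Finite.exists_equiv_fin W
  refine ⟨fun v => f v * n + e v, fun u v huv => e.injective (Fin.ext ?_), fun u v huv => ?_⟩
  · have hu := (e u).2
    have hv := (e v).2
    have : f u = f v := by
      rcases lt_trichotomy (f u) (f v) with h | h | h
      · nlinarith
      · exact h
      · nlinarith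
    simp only [this] at huv
    omega
  · by_contra! h
    have hu := (e u).2
    have hv := (e v).2
    simp only at huv
    nlinarith

namespace TdFragile

def fragilityRate : ℕ → ℕ → ℕ
  | 0, _ => 1
  | t + 1, a => 2 * a * fragilityRate t (2 * a)

lemma fragilityRate_eq : ∀ t a : ℕ, fragilityRate t a = 2 ^ (t * (t + 1) / 2) * a ^ t
  | 0, _ => rfl
  | t + 1, a => by
    have hsucc : (t + 1) * (t + 1 + 1) / 2 = t * (t + 1) / 2 + (t + 1) := by
      have : (t + 1) * (t + 1 + 1) = t * (t + 1) + 2 * (t + 1) := by ring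
      omega
    rw [fragilityRate, fragilityRate_eq t, hsucc]
    ring

lemma fragilityRate_le (t a : ℕ) : fragilityRate t a ≤ 2 ^ (t * (t + 1) / 2 + 1) * a ^ t := by
  rw [fragilityRate_eq, pow_succ]
  nlinarith [Nat.zero_le (2 ^ (t * (t + 1) / 2) * a ^ t)]

structure RootedForest (N : Type) where
  parent : N → N
  depth : N → ℕ
  parent_eq_self : ∀ y, depth y = 0 → parent y = y
  depth_parent : ∀ y, depth (parent y) = depth y - 1

namespace RootedForest

variable {N : Type} (F : RootedForest N)

def Anc (u v : N) : Prop := ∃ k, F.parent^[k] v = u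

lemma depth_iterate (k : ℕ) (y : N) : F.depth (F.parent^[k] y) = F.depth y - k := by
  induction k with
  | zero => rfl
  | succ k ih => rw [Function.iterate_succ_apply', F.depth_parent, ih]; omega

lemma iterate_eq_self {y : N} (h : F.depth y = 0) (k : ℕ) : F.parent^[k] y = y :=
  Function.iterate_fixed (F.parent_eq_self y h) k

lemma anc_refl (v : N) : F.Anc v v := ⟨0, rfl⟩

lemma anc_parent (v : N) : F.Anc (F.parent v) v := ⟨1, rfl⟩

variable {F} in
lemma Anc.trans {u v w : N} (huv : F.Anc u v) (hvw : F.Anc v w) : F.Anc u w := by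
  obtain ⟨k, rfl⟩ := huv
  obtain ⟨l, rfl⟩ := hvw
  exact ⟨k + l, Function.iterate_add_apply _ _ _ _⟩

lemma anc_total {x y v : N} (hx : F.Anc x v) (hy : F.Anc y v) : F.Anc x y ∨ F.Anc y x := by
  obtain ⟨k, rfl⟩ := hx
  obtain ⟨l, rfl⟩ := hy
  rcases le_total l k with h | h
  · exact Or.inl ⟨k - l, by rw [← Function.iterate_add_apply, Nat.sub_add_cancel h]⟩
  · exact Or.inr ⟨l - k, by rw [← Function.iterate_add_apply, Nat.sub_add_cancel h]⟩

variable {F} in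
lemma Anc.depth_le {u v : N} (h : F.Anc u v) : F.depth u ≤ F.depth v := by
  obtain ⟨k, rfl⟩ := h
  rw [F.depth_iterate]
  omega

variable {F} in
lemma Anc.eq_of_depth_le {u v : N} (h : F.Anc u v) (hd : F.depth v ≤ F.depth u) : u = v := by
  obtain ⟨k, rfl⟩ := h
  rw [F.depth_iterate] at hd
  rcases Nat.eq_zero_or_pos k with rfl | hk
  · rfl
  · exact F.iterate_eq_self (by omega) k

variable {F} in
lemma Anc.depth_lt {u v : N} (h : F.Anc u v) (hne : u ≠ v) : F.depth u < F.depth v :=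
  h.depth_le.lt_of_ne fun hd => hne (h.eq_of_depth_le hd.ge)

variable {F} in
lemma Anc.antisymm {u v : N} (huv : F.Anc u v) (hvu : F.Anc v u) : u = v :=
  huv.eq_of_depth_le hvu.depth_le

lemma exists_anc_depth_eq {v : N} {d : ℕ} (hd : d ≤ F.depth v) :
    ∃ x, F.Anc x v ∧ F.depth x = d :=
  ⟨F.parent^[F.depth v - d] v, ⟨_, rfl⟩, by rw [F.depth_iterate]; omega⟩

lemma forall_between_of_iterate {P : N → Prop} {y : N} {p : ℕ}
    (hP : ∀ l ≤ p, P (F.parent^[l] y)) {z : N} (hz : F.Anc (F.parent^[p] y) z)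
    (hzy : F.Anc z y) : P z := by
  obtain ⟨j, rfl⟩ := hzy
  rcases le_or_gt j p with hj | hj
  · exact hP j hj
  · have hd : F.depth (F.parent^[j] y) ≤ F.depth (F.parent^[p] y) := by
      rw [F.depth_iterate, F.depth_iterate]; omega
    rw [← hz.eq_of_depth_le hd]
    exact hP p le_rfl

variable (b s : ℕ)

def Survives (v : N) : Prop := F.depth v % b ≠ s

open Classical in
noncomputable def segRoot (v : N) : N :=
  if F.depth v ≠ 0 ∧ F.Survives b s (F.parent v) then segRoot (F.parent v) else v
termination_by F.depth v
decreasing_by rw [F.depth_parent]; omega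

lemma segRoot_of_climb {v : N} (h : F.depth v ≠ 0 ∧ F.Survives b s (F.parent v)) :
    F.segRoot b s v = F.segRoot b s (F.parent v) := by
  rw [segRoot, if_pos h]

lemma segRoot_of_not_climb {v : N} (h : ¬ (F.depth v ≠ 0 ∧ F.Survives b s (F.parent v))) :
    F.segRoot b s v = v := by
  rw [segRoot, if_neg h]

variable {b s}

lemma segRoot_anc (v : N) : F.Anc (F.segRoot b s v) v := by
  induction h : F.depth v using Nat.strong_induction_on generalizing v with
  | _ n ih =>
    by_cases hc : F.depth v ≠ 0 ∧ F.Survives b s (F.parent v)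
    · rw [F.segRoot_of_climb b s hc]
      exact (ih _ (by rw [F.depth_parent]; omega) _ rfl).trans (F.anc_parent v)
    · rw [F.segRoot_of_not_climb b s hc]
      exact F.anc_refl v

lemma survives_segRoot {v : N} (hv : F.Survives b s v) :
    F.Survives b s (F.segRoot b s v) ∧ F.segRoot b s (F.segRoot b s v) = F.segRoot b s v := by
  induction h : F.depth v using Nat.strong_induction_on generalizing v with
  | _ n ih =>
    by_cases hc : F.depth v ≠ 0 ∧ F.Survives b s (F.parent v)
    · rw [F.segRoot_of_climb b s hc]
      exact ih _ (by rw [F.depth_parent]; omega) hc.2 rfl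
    · rw [F.segRoot_of_not_climb b s hc]
      exact ⟨hv, F.segRoot_of_not_climb b s hc⟩

lemma segRoot_eq_of_anc {v x : N} (hv : F.Survives b s v) (hx : F.Anc x v)
    (hd : F.depth (F.segRoot b s v) ≤ F.depth x) :
    F.Survives b s x ∧ F.segRoot b s x = F.segRoot b s v := by
  induction h : F.depth v using Nat.strong_induction_on generalizing v with
  | _ n ih =>
    by_cases hxv : x = v
    · subst hxv; exact ⟨hv, rfl⟩
    have hlt := hx.depth_lt hxv
    by_cases hc : F.depth v ≠ 0 ∧ F.Survives b s (F.parent v)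
    · rw [F.segRoot_of_climb b s hc] at hd ⊢
      obtain ⟨k, rfl⟩ := hx
      have hk : k ≠ 0 := by rintro rfl; exact hxv rfl
      have hx' : F.Anc (F.parent^[k] v) (F.parent v) :=
        ⟨k - 1, by rw [← Function.iterate_succ_apply, Nat.succ_eq_add_one, Nat.sub_add_cancel
          (Nat.pos_of_ne_zero hk)]⟩
      exact ih _ (by rw [F.depth_parent]; omega) hc.2 hx' hd rfl
    · rw [F.segRoot_of_not_climb b s hc] at hd
      omega

lemma depth_lt_depth_segRoot_add (hs : s < b) {v : N} (hv : F.Survives b s v) :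
    F.depth v < F.depth (F.segRoot b s v) + b := by
  by_contra! hcon
  obtain ⟨d, hd1, hd2, hds⟩ := Nat.exists_mod_eq_of_lt hs (F.depth (F.segRoot b s v))
  obtain ⟨x, hxv, rfl⟩ := F.exists_anc_depth_eq (show d ≤ F.depth v by omega)
  exact (F.segRoot_eq_of_anc hv hxv hd1).1 hds

lemma eq_of_anc_of_segRoot_eq (hs : s < b) {u v : N} (hv : F.Survives b s v) (huv : F.Anc u v)
    (hr : F.segRoot b s u = F.segRoot b s v) (hm : F.depth u % b = F.depth v % b) : u = v := by
  have h1 := huv.depth_le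
  have h2 : F.depth (F.segRoot b s v) ≤ F.depth u := hr ▸ (F.segRoot_anc u).depth_le
  have h3 := F.depth_lt_depth_segRoot_add hs hv
  have h4 := Nat.eq_zero_of_dvd_of_lt
    (Nat.dvd_of_mod_eq_zero (Nat.sub_mod_eq_zero_of_mod_eq hm.symm))
    (show F.depth v - F.depth u < b by omega)
  exact huv.eq_of_depth_le (by omega)

end RootedForest

/-- A tree decomposition hanging from a rooted forest: the nodes whose bags contain `v` form
a subtree with highest node `top v`. -/
structure RootedDecomp {W : Type} (G : SimpleGraph W) (t : ℕ) where
  Node : Type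
  T : RootedForest Node
  bag : Node → Finset W
  top : W → Node
  mem_bag_top : ∀ v, v ∈ bag (top v)
  anc_top : ∀ ⦃v y⦄, v ∈ bag y → T.Anc (top v) y
  mem_bag_of_anc : ∀ ⦃v y z⦄, v ∈ bag y → T.Anc (top v) z → T.Anc z y → v ∈ bag z
  exists_bag_of_adj : ∀ ⦃u v⦄, G.Adj u v → ∃ y, u ∈ bag y ∧ v ∈ bag y
  card_bag_le : ∀ y, (bag y).card ≤ t + 1

lemma RootedDecomp.mem_bag_top_of_mem_bag {W : Type} {G : SimpleGraph W} {t : ℕ}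
    (D : RootedDecomp G t) {u w : W} {y : D.Node} (hu : u ∈ D.bag y) (hw : w ∈ D.bag y)
    (hd : D.T.depth (D.top u) ≤ D.T.depth (D.top w)) : u ∈ D.bag (D.top w) := by
  rcases D.T.anc_total (D.anc_top hu) (D.anc_top hw) with h | h
  · exact D.mem_bag_of_anc hu h (D.anc_top hw)
  · rw [h.eq_of_depth_le hd]
    exact D.mem_bag_top u

section Rooting

variable {ι : Type} {T : SimpleGraph ι}

lemma exists_iterate_eq_of_walk {par : ι → ι}
    (hpar : ∀ ⦃x y⦄, T.Adj x y → par x = y ∨ par y = x) {P : ι → Prop} {i j : ι}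
    (w : T.Walk i j) (hw : ∀ n ∈ w.support, P n) :
    ∃ p q, par^[p] i = par^[q] j ∧ (∀ l ≤ p, P (par^[l] i)) ∧
      ∀ l ≤ q, P (par^[l] j) := by
  induction w with
  | nil =>
    have h0 : ∀ l ≤ 0, P (par^[l] _) := fun l hl => by
      rw [Nat.le_zero.mp hl]; exact hw _ (SimpleGraph.Walk.start_mem_support _)
    exact ⟨0, 0, rfl, h0, h0⟩
  | @cons i i₁ j hadj w' ih =>
    have hi : P i := hw _ (SimpleGraph.Walk.start_mem_support _)
    obtain ⟨p, q, heq, hp, hq⟩ :=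
      ih fun n hn => hw n (SimpleGraph.Walk.support_cons hadj w' ▸ List.mem_cons_of_mem _ hn)
    rcases hpar hadj with hup | hdown
    · refine ⟨p + 1, q, by rw [Function.iterate_succ_apply, hup, heq], ?_, hq⟩
      rintro (_ | l) hl
      · exact hi
      · rw [Function.iterate_succ_apply, hup]; exact hp l (by omega)
    · cases p with
      | zero =>
        refine ⟨0, q + 1, by rw [Function.iterate_succ_apply', ← heq, ← hdown]; rfl,
          fun l hl => by rw [Nat.le_zero.mp hl]; exact hi, fun l hl => ?_⟩
        rcases Nat.lt_or_ge l (q + 1) with hlq | hlq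
        · exact hq l (by omega)
        · rw [show l = q + 1 by omega, Function.iterate_succ_apply', ← heq]
          exact hdown ▸ hi
      | succ p =>
        refine ⟨p, q, by rw [← heq, Function.iterate_succ_apply, hdown], fun l hl => ?_, hq⟩
        have := hp (l + 1) (by omega)
        rwa [Function.iterate_succ_apply, hdown] at this

variable (hT : T.IsTree) (r : ι)

noncomputable def pathToRoot (y : ι) : T.Walk y r := (hT.existsUnique_path y r).exists.choose

lemma isPath_pathToRoot (y : ι) : (pathToRoot hT r y).IsPath :=
  (hT.existsUnique_path y r).exists.choose_spec

lemma eq_pathToRoot {y : ι} {p : T.Walk y r} (hp : p.IsPath) : p = pathToRoot hT r y :=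
  (hT.existsUnique_path y r).unique hp (isPath_pathToRoot hT r y)

lemma pathToRoot_root : pathToRoot hT r r = .nil :=
  (eq_pathToRoot hT r SimpleGraph.Walk.IsPath.nil).symm

lemma pathToRoot_eq_cons {y : ι} (hy : y ≠ r) :
    ∃ (w : ι) (h : T.Adj y w), pathToRoot hT r y = .cons h (pathToRoot hT r w) := by
  obtain ⟨w, hadj, p, hp⟩ := SimpleGraph.Walk.exists_eq_cons_of_ne hy (pathToRoot hT r y)
  have hpath := isPath_pathToRoot hT r y
  rw [hp] at hpath
  exact ⟨w, hadj, by rw [hp, eq_pathToRoot hT r hpath.of_cons]⟩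

noncomputable def treeForest : RootedForest ι where
  parent y := (pathToRoot hT r y).getVert 1
  depth y := (pathToRoot hT r y).length
  parent_eq_self y hy := by
    obtain rfl := SimpleGraph.Walk.eq_of_length_eq_zero hy
    exact SimpleGraph.Walk.getVert_of_length_le _ (by simp [hy])
  depth_parent y := by
    by_cases hy : y = r
    · subst hy
      rw [pathToRoot_root, SimpleGraph.Walk.getVert_nil, pathToRoot_root]
      rfl
    · obtain ⟨w, hadj, hw⟩ := pathToRoot_eq_cons hT r hy
      have hpar : (pathToRoot hT r y).getVert 1 = w := by rw [hw]; simp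
      rw [hpar, hw, SimpleGraph.Walk.length_cons]
      rfl

lemma treeForest_parent_eq_or_of_adj ⦃x y : ι⦄ (hadj : T.Adj x y) :
    (treeForest hT r).parent x = y ∨ (treeForest hT r).parent y = x := by
  classical
  by_cases hy : y ∈ (pathToRoot hT r x).support
  · left
    have hedge : (SimpleGraph.Walk.cons hadj .nil : T.Walk x y).IsPath := by
      simp [hadj.ne]
    have hspec := (pathToRoot hT r x).take_spec hy
    rw [(hT.existsUnique_path x y).unique ((isPath_pathToRoot hT r x).takeUntil hy) hedge]
      at hspec
    show (pathToRoot hT r x).getVert 1 = y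
    rw [← hspec]
    simp
  · right
    have hcons : (SimpleGraph.Walk.cons hadj.symm (pathToRoot hT r x)).IsPath :=
      (SimpleGraph.Walk.cons_isPath_iff _ _).2 ⟨isPath_pathToRoot hT r x, hy⟩
    show (pathToRoot hT r y).getVert 1 = x
    rw [← eq_pathToRoot hT r hcons]
    simp

lemma exists_walk_of_mem_bag {V : Type} {G : SimpleGraph V} (D : TreeDecomp G) {v : V}
    {i j : D.ι} (hi : v ∈ D.bag i) (hj : v ∈ D.bag j) :
    ∃ w : D.t.Walk i j, ∀ n ∈ w.support, v ∈ D.bag n := by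
  obtain ⟨w⟩ := (D.bag_connected v).preconnected ⟨i, hi⟩ ⟨j, hj⟩
  refine ⟨w.map (SimpleGraph.Embedding.induce {i | v ∈ D.bag i}).toHom, fun n hn => ?_⟩
  obtain ⟨m, _, rfl⟩ := List.mem_map.mp (SimpleGraph.Walk.support_map _ w ▸ hn)
  exact m.2

lemma exists_rootedDecomp {V : Type} [Finite V] {G : SimpleGraph V} {t : ℕ}
    (htw : TreewidthLE G t) : Nonempty (RootedDecomp G t) := by
  obtain ⟨D, hD⟩ := htw
  obtain ⟨r⟩ := D.tree.1.nonempty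
  set F := treeForest D.tree r
  have hmin : ∀ v, ∃ y, v ∈ D.bag y ∧ ∀ z, v ∈ D.bag z → F.depth y ≤ F.depth z := by
    intro v
    obtain ⟨i, hi⟩ := D.mem_bag v
    obtain ⟨y, hy, hmin⟩ :=
      (InvImage.wf F.depth wellFounded_lt).has_min {y | v ∈ D.bag y} ⟨i, hi⟩
    exact ⟨y, hy, fun z hz => not_lt.mp (hmin z hz)⟩
  choose top htop hmin using hmin
  have hclimb : ∀ v y, v ∈ D.bag y →
      ∃ p, F.parent^[p] y = top v ∧ ∀ l ≤ p, v ∈ D.bag (F.parent^[l] y) := by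
    intro v y hy
    obtain ⟨w, hw⟩ := exists_walk_of_mem_bag D hy (htop v)
    obtain ⟨p, q, heq, hp, hq⟩ :=
      exists_iterate_eq_of_walk (treeForest_parent_eq_or_of_adj D.tree r) w hw
    have htopq : F.parent^[q] (top v) = top v :=
      RootedForest.Anc.eq_of_depth_le ⟨q, rfl⟩ (hmin v _ (hq q le_rfl))
    exact ⟨p, heq.trans htopq, hp⟩
  exact ⟨{
    Node := D.ι
    T := F
    bag := fun y => (D.bag y).toFinite.toFinset
    top := top
    mem_bag_top := fun v => by simpa using htop v
    anc_top := fun v y hy => by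
      obtain ⟨p, hp, -⟩ := hclimb v y (by simpa using hy)
      exact ⟨p, hp⟩
    mem_bag_of_anc := fun v y z hy h1 h2 => by
      obtain ⟨p, hp, hpres⟩ := hclimb v y (by simpa using hy)
      simpa using F.forall_between_of_iterate (P := fun n => v ∈ D.bag n) hpres (hp ▸ h1) h2
    exists_bag_of_adj := fun u v huv => by simpa using D.edge_bag huv
    card_bag_le := fun y => by
      rw [← Set.ncard_eq_toFinset_card _]
      exact hD y }⟩

end Rooting

structure IsGuidedForestOrder {W : Type} (G : SimpleGraph W) (R : W → W → Prop) (X : Finset W)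
    (le : W → W → Prop) (n : ℕ) : Prop where
  refl : ∀ v, le v v
  trans : ∀ ⦃u v w⦄, le u v → le v w → le u w
  antisymm : ∀ ⦃u v⦄, le u v → le v u → u = v
  chain : ∀ ⦃v x y⦄, le x v → le y v → le x y ∨ le y x
  adj : ∀ ⦃u v⦄, u ∉ X → v ∉ X → G.Adj u v → le u v ∨ le v u
  R_of_le : ∀ ⦃u v⦄, le u v → u ≠ v → R u v
  card_le : ∀ v ∉ X, {u | le u v}.ncard ≤ n

lemma IsGuidedForestOrder.treedepthLE {W : Type} [Fintype W] [DecidableEq W]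
    {G : SimpleGraph W} {R : W → W → Prop} {X : Finset W} {le : W → W → Prop} {n : ℕ}
    (h : IsGuidedForestOrder G R X le n) : TreedepthLE (G.induce (↑(Xᶜ) : Set W)) n := by
  refine ⟨fun u v => le u.1 v.1, ⟨fun u => h.refl u.1, fun _ _ _ h1 h2 => h.trans h1 h2,
    fun _ _ h1 h2 => Subtype.ext (h.antisymm h1 h2), fun _ _ _ hx hy => h.chain hx hy,
    fun u v huv => h.adj (by simpa using u.2) (by simpa using v.2) huv⟩, fun v => ?_⟩
  calc {u : ↥(↑(Xᶜ) : Set W) | le u.1 v.1}.ncard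
      = (Subtype.val '' {u : ↥(↑(Xᶜ) : Set W) | le u.1 v.1}).ncard :=
        (Set.ncard_image_of_injective _ Subtype.val_injective).symm
    _ ≤ {u | le u v.1}.ncard := Set.ncard_le_ncard (by rintro _ ⟨u, hu, rfl⟩; exact hu)
    _ ≤ n := h.card_le v.1 (by simpa using v.2)

/-- `R` is the relation that the forest orders of the induction refine: a ranking of the
vertices at the top level, the guardian forest of the level above further down. -/
structure GuidedDecomp {W : Type} (G : SimpleGraph W) (t : ℕ) where
  D : RootedDecomp G t
  R : W → W → Prop
  rank : W → ℕ
  R_trans : ∀ ⦃x y z⦄, R x y → R y z → R x z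
  R_chain : ∀ ⦃v x y⦄, R x v → R y v → R x y ∨ R y x
  R_total_of_mem_bag : ∀ ⦃y u w⦄, u ∈ D.bag y → w ∈ D.bag y → R u w ∨ R w u
  depth_top_le_of_R : ∀ ⦃u v⦄, R u v → D.T.depth (D.top u) ≤ D.T.depth (D.top v)
  rank_lt_of_R : ∀ ⦃u v⦄, R u v → u ≠ v → rank u < rank v

namespace GuidedDecomp

section Guardians

variable {W : Type} {G : SimpleGraph W} {t : ℕ} (S : GuidedDecomp G t)

open Classical in
noncomputable def guardians (v : W) : Finset W :=
  ((S.D.bag (S.D.top v)).erase v).filter (S.R · v)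

variable {S} in
lemma mem_guardians {u v : W} :
    u ∈ S.guardians v ↔ u ≠ v ∧ u ∈ S.D.bag (S.D.top v) ∧ S.R u v := by
  simp [guardians, and_assoc]

lemma mem_guardians_of_R {u w : W} {y : S.D.Node} (hu : u ∈ S.D.bag y) (hw : w ∈ S.D.bag y)
    (hne : u ≠ w) (hR : S.R u w) : u ∈ S.guardians w :=
  mem_guardians.2 ⟨hne, S.D.mem_bag_top_of_mem_bag hu hw (S.depth_top_le_of_R hR), hR⟩

lemma rank_lt_of_mem_guardians {u v : W} (hu : u ∈ S.guardians v) : S.rank u < S.rank v :=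
  S.rank_lt_of_R (mem_guardians.1 hu).2.2 (mem_guardians.1 hu).1

open Classical in
noncomputable def parent (v : W) : W :=
  if h : (S.guardians v).Nonempty then (Finset.exists_max_image (S.guardians v) S.rank h).choose
  else v

lemma parent_spec {v : W} (h : (S.guardians v).Nonempty) :
    S.parent v ∈ S.guardians v ∧ ∀ u ∈ S.guardians v, S.rank u ≤ S.rank (S.parent v) := by
  rw [parent, dif_pos h]
  exact (Finset.exists_max_image (S.guardians v) S.rank h).choose_spec

lemma parent_of_not_nonempty {v : W} (h : ¬ (S.guardians v).Nonempty) : S.parent v = v := by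
  rw [parent, dif_neg h]

lemma parent_ne_iff {v : W} : S.parent v ≠ v ↔ (S.guardians v).Nonempty :=
  ⟨fun hne => by_contra fun h => hne (S.parent_of_not_nonempty h),
    fun h => (mem_guardians.1 (S.parent_spec h).1).1⟩

noncomputable def guardDepth (v : W) : ℕ :=
  if h : (S.guardians v).Nonempty then guardDepth (S.parent v) + 1 else 0
termination_by S.rank v
decreasing_by exact S.rank_lt_of_mem_guardians (S.parent_spec h).1

noncomputable def forest : RootedForest W where
  parent := S.parent
  depth := S.guardDepth
  parent_eq_self v h := S.parent_of_not_nonempty fun hne => by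
    rw [guardDepth, dif_pos hne] at h
    omega
  depth_parent v := by
    by_cases h : (S.guardians v).Nonempty
    · conv_rhs => rw [guardDepth, dif_pos h]
      rfl
    · rw [S.parent_of_not_nonempty h, guardDepth, dif_neg h]

lemma forest_parent (v : W) : S.forest.parent v = S.parent v := rfl

lemma R_parent {v : W} (h : S.parent v ≠ v) : S.R (S.parent v) v :=
  (mem_guardians.1 (S.parent_spec (S.parent_ne_iff.1 h)).1).2.2

lemma R_of_anc_of_ne {u v : W} (h : S.forest.Anc u v) (hne : u ≠ v) : S.R u v := by
  obtain ⟨k, rfl⟩ := h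
  induction k with
  | zero => exact absurd rfl hne
  | succ k ih =>
    rw [Function.iterate_succ_apply', forest_parent] at hne ⊢
    set x := S.forest.parent^[k] v
    by_cases hx : S.parent x = x
    · rw [hx] at hne ⊢; exact ih hne
    by_cases hxv : x = v
    · rw [hxv] at hx ⊢; exact S.R_parent hx
    · exact S.R_trans (S.R_parent hx) (ih hxv)

lemma mem_guardians_parent {u v : W} (hu : u ∈ S.guardians v) (hne : u ≠ S.parent v) :
    u ∈ S.guardians (S.parent v) := by
  have h : (S.guardians v).Nonempty := ⟨u, hu⟩
  obtain ⟨hpv, hmax⟩ := S.parent_spec h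
  obtain ⟨-, hubag, huR⟩ := mem_guardians.1 hu
  obtain ⟨-, hpbag, hpR⟩ := mem_guardians.1 hpv
  have hRup : S.R u (S.parent v) := (S.R_chain huR hpR).resolve_right fun hpu =>
    (hmax u hu).not_gt (S.rank_lt_of_R hpu (Ne.symm hne))
  exact S.mem_guardians_of_R hubag hpbag hne hRup

lemma anc_of_mem_guardians {u v : W} (hu : u ∈ S.guardians v) : S.forest.Anc u v := by
  induction h : S.rank v using Nat.strong_induction_on generalizing u v with
  | _ n ih =>
    have hv : (S.guardians v).Nonempty := ⟨u, hu⟩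
    by_cases hup : u = S.parent v
    · rw [hup]; exact S.forest.anc_parent v
    · have hlt := S.rank_lt_of_mem_guardians (S.parent_spec hv).1
      exact (ih _ (h ▸ hlt) (S.mem_guardians_parent hu hup) rfl).trans (S.forest.anc_parent v)

lemma anc_or_anc_of_mem_bag {u w : W} {y : S.D.Node} (hu : u ∈ S.D.bag y) (hw : w ∈ S.D.bag y) :
    S.forest.Anc u w ∨ S.forest.Anc w u := by
  by_cases huw : u = w
  · exact Or.inl (huw ▸ S.forest.anc_refl u)
  rcases S.R_total_of_mem_bag hu hw with h | h
  · exact Or.inl (S.anc_of_mem_guardians (S.mem_guardians_of_R hu hw huw h))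
  · exact Or.inr (S.anc_of_mem_guardians (S.mem_guardians_of_R hw hu (Ne.symm huw) h))

lemma anc_or_anc_of_adj {u v : W} (h : G.Adj u v) : S.forest.Anc u v ∨ S.forest.Anc v u := by
  obtain ⟨y, hu, hv⟩ := S.D.exists_bag_of_adj h
  exact S.anc_or_anc_of_mem_bag hu hv

lemma depth_top_le_of_anc {u v : W} (h : S.forest.Anc u v) :
    S.D.T.depth (S.D.top u) ≤ S.D.T.depth (S.D.top v) := by
  by_cases huv : u = v
  · rw [huv]
  · exact S.depth_top_le_of_R (S.R_of_anc_of_ne h huv)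

lemma bag_subset_insert_guardians [DecidableEq W] {x : W} {y : S.D.Node} (hx : x ∈ S.D.bag y)
    (hmax : ∀ u ∈ S.D.bag y, S.rank u ≤ S.rank x) :
    S.D.bag y ⊆ insert x (S.guardians x) := by
  intro u hu
  rw [Finset.mem_insert]
  by_cases hux : u = x
  · exact Or.inl hux
  have hR : S.R u x := (S.R_total_of_mem_bag hu hx).resolve_right fun hxu =>
    (hmax u hu).not_gt (S.rank_lt_of_R hxu (Ne.symm hux))
  exact Or.inr (S.mem_guardians_of_R hu hx hux hR)

lemma insert_guardians_subset [DecidableEq W] (v : W) :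
    insert v (S.guardians v) ⊆ S.D.bag (S.D.top v) :=
  Finset.insert_subset (S.D.mem_bag_top v) fun _ hu => (mem_guardians.1 hu).2.1

section Contraction

variable (b s : ℕ)

abbrev Segment : Type := {w : W // S.forest.Survives b s w ∧ S.forest.segRoot b s w = w}

variable {b s} in
noncomputable def toSegment {u : W} (hu : S.forest.Survives b s u) : S.Segment b s :=
  ⟨S.forest.segRoot b s u, S.forest.survives_segRoot hu⟩

def segmentGraph : SimpleGraph (S.Segment b s) :=
  SimpleGraph.fromRel fun σ τ => ∃ u v, G.Adj u v ∧
    ∃ (hu : S.forest.Survives b s u) (hv : S.forest.Survives b s v),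
      S.toSegment hu = σ ∧ S.toSegment hv = τ

variable {S b s}

lemma toSegment_eq_toSegment_iff {u v : W} (hu : S.forest.Survives b s u)
    (hv : S.forest.Survives b s v) :
    S.toSegment hu = S.toSegment hv ↔ S.forest.segRoot b s u = S.forest.segRoot b s v :=
  Subtype.ext_iff

lemma anc_top_of_mem_segment {u x : W} {y : S.D.Node} (huy : u ∈ S.D.bag y)
    (hu : S.forest.Survives b s u) (hxu : S.forest.Anc x u)
    (hx : S.forest.depth (S.forest.segRoot b s u) ≤ S.forest.depth x) :
    S.D.T.Anc (S.D.top x) y ∧ ∀ z, S.D.T.Anc (S.D.top x) z → S.D.T.Anc z y →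
      ∃ w ∈ S.D.bag z, ∃ hw : S.forest.Survives b s w, S.toSegment hw = S.toSegment hu := by
  obtain ⟨k, rfl⟩ := hxu
  induction k with
  | zero =>
    exact ⟨S.D.anc_top huy, fun z h1 h2 => ⟨u, S.D.mem_bag_of_anc huy h1 h2, hu, rfl⟩⟩
  | succ k ih =>
    rw [Function.iterate_succ_apply'] at hx ⊢
    set c := S.forest.parent^[k] u
    have hc : S.forest.depth (S.forest.segRoot b s u) ≤ S.forest.depth c :=
      hx.trans ((S.forest.anc_parent c).depth_le)
    obtain ⟨hcy, hcz⟩ := ih hc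
    by_cases hpc : S.parent c = c
    · rw [forest_parent, hpc]; exact ⟨hcy, hcz⟩
    have hxc : S.parent c ∈ S.D.bag (S.D.top c) :=
      (mem_guardians.1 (S.parent_spec (S.parent_ne_iff.1 hpc)).1).2.1
    refine ⟨(S.D.anc_top hxc).trans hcy, fun z h1 h2 => ?_⟩
    rcases S.D.T.anc_total hcy h2 with h | h
    · exact hcz z h h2
    · have hxu : S.forest.Anc (S.parent c) u := (S.forest.anc_parent c).trans ⟨k, rfl⟩
      obtain ⟨hxs, hxr⟩ := S.forest.segRoot_eq_of_anc hu hxu hx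
      exact ⟨S.parent c, S.D.mem_bag_of_anc hxc h1 h, hxs,
        (toSegment_eq_toSegment_iff _ _).2 hxr⟩

variable [Finite W]

variable (S b s) in
noncomputable def segmentBag (y : S.D.Node) : Finset (S.Segment b s) :=
  {σ | ∃ u ∈ S.D.bag y, ∃ hu : S.forest.Survives b s u,
    S.toSegment hu = σ}.toFinite.toFinset

lemma mem_segmentBag {σ : S.Segment b s} {y : S.D.Node} :
    σ ∈ S.segmentBag b s y ↔
      ∃ u ∈ S.D.bag y, ∃ hu : S.forest.Survives b s u, S.toSegment hu = σ := by
  simp [segmentBag]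

lemma anc_top_of_mem_segmentBag {σ : S.Segment b s} {y : S.D.Node}
    (hσ : σ ∈ S.segmentBag b s y) :
    S.D.T.Anc (S.D.top σ.1) y ∧ ∀ z, S.D.T.Anc (S.D.top σ.1) z → S.D.T.Anc z y →
      σ ∈ S.segmentBag b s z := by
  obtain ⟨u, huy, hu, rfl⟩ := mem_segmentBag.1 hσ
  obtain ⟨h1, h2⟩ := anc_top_of_mem_segment huy hu (S.forest.segRoot_anc u) le_rfl
  exact ⟨h1, fun z hz hzy => mem_segmentBag.2 (h2 z hz hzy)⟩

lemma anc_or_anc_of_mem_segmentBag {σ τ : S.Segment b s} {y : S.D.Node}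
    (hσ : σ ∈ S.segmentBag b s y) (hτ : τ ∈ S.segmentBag b s y) :
    S.forest.Anc σ.1 τ.1 ∨ S.forest.Anc τ.1 σ.1 := by
  obtain ⟨u, huy, hu, rfl⟩ := mem_segmentBag.1 hσ
  obtain ⟨v, hvy, hv, rfl⟩ := mem_segmentBag.1 hτ
  have hsu := S.forest.segRoot_anc (b := b) (s := s) u
  have hsv := S.forest.segRoot_anc (b := b) (s := s) v
  rcases S.anc_or_anc_of_mem_bag huy hvy with h | h
  · exact S.forest.anc_total (hsu.trans h) hsv
  · exact S.forest.anc_total hsu (hsv.trans h)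

/-- The segments met by a bag are those of its top-ranked vertex `x` and of the guardians of
`x`; either `x` or its parent is deleted, or the two share a segment. -/
lemma card_segmentBag_le {S : GuidedDecomp G (t + 1)} (y : S.D.Node) :
    (S.segmentBag b s y).card ≤ t + 1 := by
  classical
  rcases (S.D.bag y).eq_empty_or_nonempty with hy | hy
  · have : S.segmentBag b s y = ∅ := Finset.eq_empty_of_forall_notMem fun σ hσ => by
      obtain ⟨u, hu, -⟩ := mem_segmentBag.1 hσ
      simp [hy] at hu
    simp [this]
  obtain ⟨x, hx, hmax⟩ := Finset.exists_max_image (S.D.bag y) S.rank hy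
  set B := insert x (S.guardians x)
  set C := B.filter (S.forest.Survives b s)
  have hBcard : B.card ≤ t + 2 := (Finset.card_le_card (S.insert_guardians_subset x)).trans
    (S.D.card_bag_le _)
  have hsub : (S.segmentBag b s y).card ≤ (C.image (S.forest.segRoot b s)).card := by
    refine Finset.card_le_card_of_injOn Subtype.val (fun σ hσ => ?_) Subtype.val_injective.injOn
    obtain ⟨u, huy, hu, rfl⟩ := mem_segmentBag.1 hσ
    exact Finset.mem_image_of_mem _
      (Finset.mem_filter.2 ⟨S.bag_subset_insert_guardians hx hmax huy, hu⟩)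
  by_cases hg : (S.guardians x).Nonempty
  · suffices (C.image (S.forest.segRoot b s)).card < B.card by omega
    obtain ⟨hp, -⟩ := S.parent_spec hg
    have hpx : S.parent x ≠ x := S.parent_ne_iff.2 hg
    have hpB : S.parent x ∈ B := Finset.mem_insert_of_mem hp
    by_cases hxp : S.forest.Survives b s x ∧ S.forest.Survives b s (S.parent x)
    · refine (Finset.card_image_le.lt_of_ne fun h => hpx ?_).trans_le (Finset.card_filter_le _ _)
      refine Finset.injOn_of_card_image_eq h (Finset.mem_filter.2 ⟨hpB, hxp.2⟩)
        (Finset.mem_filter.2 ⟨Finset.mem_insert_self x _, hxp.1⟩) ?_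
      have hx0 : S.forest.depth x ≠ 0 := fun h0 => hpx (S.forest.parent_eq_self x h0)
      exact (S.forest.segRoot_of_climb b s ⟨hx0, hxp.2⟩).symm
    · refine Finset.card_image_le.trans_lt (Finset.card_lt_card ?_)
      refine (Finset.filter_ssubset).2 ?_
      by_cases hxs : S.forest.Survives b s x
      · exact ⟨S.parent x, hpB, fun h => hxp ⟨hxs, h⟩⟩
      · exact ⟨x, Finset.mem_insert_self x _, hxs⟩
  · have hB : B = {x} := by simp [B, Finset.not_nonempty_iff_eq_empty.1 hg]
    have : C.card ≤ 1 := (Finset.card_filter_le _ _).trans (by simp [hB])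
    have := (Finset.card_image_le (s := C) (f := S.forest.segRoot b s)).trans this
    omega

variable (S b s) in
noncomputable def segmentDecomp (S : GuidedDecomp G (t + 1)) :
    RootedDecomp (S.segmentGraph b s) t where
  Node := S.D.Node
  T := S.D.T
  bag := S.segmentBag b s
  top σ := S.D.top σ.1
  mem_bag_top σ := mem_segmentBag.2 ⟨σ.1, S.D.mem_bag_top σ.1, σ.2.1, Subtype.ext σ.2.2⟩
  anc_top _ _ hσ := (anc_top_of_mem_segmentBag hσ).1
  mem_bag_of_anc _ _ z hσ h1 h2 := (anc_top_of_mem_segmentBag hσ).2 z h1 h2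
  exists_bag_of_adj σ τ hστ := by
    obtain ⟨-, ⟨u, v, huv, hu, hv, rfl, rfl⟩ | ⟨v, u, hvu, hv, hu, rfl, rfl⟩⟩ := hστ
    · obtain ⟨y, huy, hvy⟩ := S.D.exists_bag_of_adj huv
      exact ⟨y, mem_segmentBag.2 ⟨u, huy, hu, rfl⟩, mem_segmentBag.2 ⟨v, hvy, hv, rfl⟩⟩
    · obtain ⟨y, hvy, huy⟩ := S.D.exists_bag_of_adj hvu
      exact ⟨y, mem_segmentBag.2 ⟨u, huy, hu, rfl⟩, mem_segmentBag.2 ⟨v, hvy, hv, rfl⟩⟩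
  card_bag_le := card_segmentBag_le

variable (S b s) in
noncomputable def contract (S : GuidedDecomp G (t + 1)) : GuidedDecomp (S.segmentGraph b s) t where
  D := S.segmentDecomp b s
  R σ τ := S.forest.Anc σ.1 τ.1
  rank σ := S.forest.depth σ.1
  R_trans _ _ _ h1 h2 := h1.trans h2
  R_chain _ _ _ h1 h2 := S.forest.anc_total h1 h2
  R_total_of_mem_bag _ _ _ := anc_or_anc_of_mem_segmentBag
  depth_top_le_of_R _ _ h := S.depth_top_le_of_anc h
  rank_lt_of_R _ _ h hne := h.depth_lt (Subtype.val_injective.ne hne)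

variable (S b s) in
noncomputable def deletedSet (Y : Finset (S.Segment b s)) : Finset W :=
  {w | ¬ S.forest.Survives b s w ∨
    ∃ hw : S.forest.Survives b s w, S.toSegment hw ∈ Y}.toFinite.toFinset

lemma notMem_deletedSet {Y : Finset (S.Segment b s)} {w : W} :
    w ∉ S.deletedSet b s Y ↔ ∃ hw : S.forest.Survives b s w, S.toSegment hw ∉ Y := by
  simp only [deletedSet, Set.Finite.mem_toFinset, Set.mem_ofPred_eq, not_or, not_not, not_exists]
  exact ⟨fun ⟨h, h'⟩ => ⟨h, h' h⟩, fun ⟨h, h'⟩ => ⟨h, fun _ => h'⟩⟩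

lemma mem_deletedSet_iff {Y : Finset (S.Segment b s)} {w : W} (hw : S.forest.Survives b s w) :
    w ∈ S.deletedSet b s Y ↔ S.toSegment hw ∈ Y := by
  simp [deletedSet, hw]

end Contraction

end Guardians

section Lifting

variable {W : Type} [Finite W] {G : SimpleGraph W} {t : ℕ} {S : GuidedDecomp G (t + 1)}
  {b s : ℕ} {Y : Finset (S.Segment b s)} {le' : S.Segment b s → S.Segment b s → Prop}
  {n : ℕ}

variable (S b s le') in
def liftOrder (u v : W) : Prop :=
  u = v ∨ S.forest.Anc u v ∧ ∃ (hu : S.forest.Survives b s u) (hv : S.forest.Survives b s v),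
    le' (S.toSegment hu) (S.toSegment hv)

lemma le_toSegment_of_anc
    (hle : IsGuidedForestOrder (S.segmentGraph b s) (S.contract b s).R Y le' n)
    {x y : W} (hx : S.forest.Survives b s x) (hy : S.forest.Survives b s y)
    (hxy : S.forest.Anc x y)
    (h : le' (S.toSegment hx) (S.toSegment hy) ∨ le' (S.toSegment hy) (S.toSegment hx)) :
    le' (S.toSegment hx) (S.toSegment hy) := by
  rcases h with h | h
  · exact h
  by_cases heq : S.toSegment hy = S.toSegment hx
  · rw [heq]; exact hle.refl _
  have hyx : S.forest.Anc (S.forest.segRoot b s y) (S.forest.segRoot b s x) := hle.R_of_le h heq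
  have hd := hyx.depth_le |>.trans ((S.forest.segRoot_anc x).depth_le)
  exact absurd
    ((toSegment_eq_toSegment_iff hy hx).2 (S.forest.segRoot_eq_of_anc hy hxy hd).2.symm) heq

lemma liftOrder_chain (hle : IsGuidedForestOrder (S.segmentGraph b s) (S.contract b s).R Y le' n)
    {v x y : W} (hx : S.liftOrder b s le' x v) (hy : S.liftOrder b s le' y v) :
    S.liftOrder b s le' x y ∨ S.liftOrder b s le' y x := by
  rcases hx with rfl | ⟨hxv, hx, hv, hxle⟩
  · exact Or.inr hy
  rcases hy with rfl | ⟨hyv, hy, _, hyle⟩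
  · exact Or.inl (Or.inr ⟨hxv, hx, hv, hxle⟩)
  rcases S.forest.anc_total hxv hyv with h | h
  · exact Or.inl (Or.inr ⟨h, hx, hy, le_toSegment_of_anc hle hx hy h (hle.chain hxle hyle)⟩)
  · exact Or.inr (Or.inr ⟨h, hy, hx, le_toSegment_of_anc hle hy hx h (hle.chain hyle hxle)⟩)

lemma liftOrder_adj (hle : IsGuidedForestOrder (S.segmentGraph b s) (S.contract b s).R Y le' n)
    {u v : W} (hu : u ∉ S.deletedSet b s Y) (hv : v ∉ S.deletedSet b s Y) (huv : G.Adj u v) :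
    S.liftOrder b s le' u v ∨ S.liftOrder b s le' v u := by
  have key : ∀ {u v}, u ∉ S.deletedSet b s Y → v ∉ S.deletedSet b s Y → G.Adj u v →
      S.forest.Anc u v → S.liftOrder b s le' u v := by
    intro u v hu hv huv hanc
    obtain ⟨hu, huY⟩ := notMem_deletedSet.1 hu
    obtain ⟨hv, hvY⟩ := notMem_deletedSet.1 hv
    refine Or.inr ⟨hanc, hu, hv, le_toSegment_of_anc hle hu hv hanc ?_⟩
    by_cases heq : S.toSegment hu = S.toSegment hv
    · exact Or.inl (heq ▸ hle.refl _)
    · exact hle.adj huY hvY ⟨heq, Or.inl ⟨u, v, huv, hu, hv, rfl, rfl⟩⟩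
  rcases S.anc_or_anc_of_adj huv with h | h
  · exact Or.inl (key hu hv huv h)
  · exact Or.inr (key hv hu huv.symm h)

/-- A vertex below `v` is determined by its segment, which is below that of `v`, and by its
level modulo `b`. -/
lemma card_liftOrder_le (hs : s < b)
    (hle : IsGuidedForestOrder (S.segmentGraph b s) (S.contract b s).R Y le' n)
    {v : W} (hv : v ∉ S.deletedSet b s Y) : {u | S.liftOrder b s le' u v}.ncard ≤ b * n := by
  obtain ⟨hv, hvY⟩ := notMem_deletedSet.1 hv
  have hdown : ∀ u, S.liftOrder b s le' u v →
      S.forest.Anc u v ∧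
        ∃ hu : S.forest.Survives b s u, le' (S.toSegment hu) (S.toSegment hv) := by
    rintro u (rfl | ⟨huv, hu, _, hle'⟩)
    · exact ⟨S.forest.anc_refl u, hv, hle.refl _⟩
    · exact ⟨huv, hu, hle'⟩
  set below := {σ | le' σ (S.toSegment hv)}
  calc {u | S.liftOrder b s le' u v}.ncard
      ≤ ((Subtype.val '' below) ×ˢ (Finset.range b : Set ℕ)).ncard := by
        refine Set.ncard_le_ncard_of_injOn (fun u => (S.forest.segRoot b s u, S.forest.depth u % b))
          (fun u hu => ?_) (fun u hu u' hu' huu' => ?_) (Set.toFinite _)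
        · obtain ⟨-, hu, hle'⟩ := hdown u hu
          exact ⟨⟨_, hle', rfl⟩, by simpa using Nat.mod_lt _ (by omega)⟩
        · obtain ⟨huv, hu, -⟩ := hdown u hu
          obtain ⟨hu'v, hu', -⟩ := hdown u' hu'
          simp only [Prod.mk.injEq] at huu'
          rcases S.forest.anc_total huv hu'v with h | h
          · exact S.forest.eq_of_anc_of_segRoot_eq hs hu' h huu'.1 huu'.2
          · exact (S.forest.eq_of_anc_of_segRoot_eq hs hu h huu'.1.symm huu'.2.symm).symm
    _ = below.ncard * b := by
        rw [Set.ncard_prod, Set.ncard_image_of_injective _ Subtype.val_injective,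
          Set.ncard_coe_finset, Finset.card_range]
    _ ≤ b * n := by rw [mul_comm]; exact Nat.mul_le_mul_left b (hle.card_le _ hvY)

lemma isGuidedForestOrder_liftOrder (hs : s < b)
    (hle : IsGuidedForestOrder (S.segmentGraph b s) (S.contract b s).R Y le' n) :
    IsGuidedForestOrder G S.R (S.deletedSet b s Y) (S.liftOrder b s le') (b * n) where
  refl _ := Or.inl rfl
  trans u v w := by
    rintro (rfl | ⟨huv, hu, hv, h1⟩) (rfl | ⟨hvw, hv', hw, h2⟩)
    · exact Or.inl rfl
    · exact Or.inr ⟨hvw, hv', hw, h2⟩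
    · exact Or.inr ⟨huv, hu, hv, h1⟩
    · exact Or.inr ⟨huv.trans hvw, hu, hw, hle.trans h1 h2⟩
  antisymm u v := by
    rintro (rfl | ⟨huv, -⟩) (h | ⟨hvu, -⟩)
    · rfl
    · rfl
    · exact h.symm
    · exact huv.antisymm hvu
  chain _ _ _ := liftOrder_chain hle
  adj _ _ := liftOrder_adj hle
  R_of_le u v := by
    rintro (rfl | ⟨huv, -⟩) hne
    · exact absurd rfl hne
    · exact S.R_of_anc_of_ne huv hne
  card_le _ := card_liftOrder_le hs hle

end Lifting

section Distribution

variable {W : Type} {G : SimpleGraph W} {t : ℕ}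

def HasFragileDistribution (S : GuidedDecomp G t) (a n : ℕ) : Prop :=
  ∃ p : PMF (Finset W), (∀ X ∈ p.support, ∃ le, IsGuidedForestOrder G S.R X le n) ∧
    ∀ v, p.toOuterMeasure {X | v ∈ X} ≤ (a : ℝ≥0∞)⁻¹

lemma hasFragileDistribution_zero (S : GuidedDecomp G 0) (a : ℕ) :
    S.HasFragileDistribution a 1 := by
  refine ⟨PMF.pure ∅, fun X hX => ?_, fun v => by simp⟩
  rw [PMF.support_pure, Set.mem_singleton_iff] at hX
  subst hX
  refine ⟨Eq, fun _ => rfl, fun _ _ _ => Eq.trans, fun _ _ h _ => h,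
    fun _ _ _ hx hy => Or.inl (hx.trans hy.symm), fun u v _ _ huv => ?_,
    fun _ _ h hne => absurd h hne, fun v _ => by simp⟩
  obtain ⟨y, hu, hv⟩ := S.D.exists_bag_of_adj huv
  have := S.D.card_bag_le y
  have := Finset.one_lt_card.2 ⟨u, hu, v, hv, huv.ne⟩
  omega

/-- The level of `v` is deleted for one residue `s`; for every other residue `v` is deleted only
together with its segment. -/
lemma sum_toOuterMeasure_deletedSet_le [Finite W] (S : GuidedDecomp G (t + 1)) {b : ℕ}
    (hb : 0 < b) {q : ∀ s, PMF (Finset (S.Segment b s))}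
    (hq : ∀ s σ, (q s).toOuterMeasure {Y | σ ∈ Y} ≤ (b : ℝ≥0∞)⁻¹) (v : W) :
    ∑ s ∈ Finset.range b, (q s).toOuterMeasure (S.deletedSet b s ⁻¹' {X | v ∈ X}) ≤ 2 :=
  calc ∑ s ∈ Finset.range b, (q s).toOuterMeasure (S.deletedSet b s ⁻¹' {X | v ∈ X})
      ≤ ∑ s ∈ Finset.range b,
          ((if S.forest.depth v % b = s then 1 else 0) + (b : ℝ≥0∞)⁻¹) := by
        refine Finset.sum_le_sum fun s _ => ?_
        by_cases hvs : S.forest.depth v % b = s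
        · rw [if_pos hvs]
          exact le_add_right ((q s).toOuterMeasure_apply_le_one _)
        · have hpre : S.deletedSet b s ⁻¹' {X | v ∈ X} = {Y | S.toSegment hvs ∈ Y} :=
            Set.ext fun Y => mem_deletedSet_iff hvs
          rw [if_neg hvs, zero_add, hpre]
          exact hq s _
    _ = 2 := by
        rw [Finset.sum_add_distrib, Finset.sum_ite_eq, if_pos (Finset.mem_range.2
          (Nat.mod_lt _ hb)), Finset.sum_const, Finset.card_range, nsmul_eq_mul,
          ENNReal.mul_inv_cancel (by simp; omega) (ENNReal.natCast_ne_top _), one_add_one_eq_two]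

lemma hasFragileDistribution_succ [Finite W] (S : GuidedDecomp G (t + 1)) {a n : ℕ} (ha : 0 < a)
    (h : ∀ s, (S.contract (2 * a) s).HasFragileDistribution (2 * a) n) :
    S.HasFragileDistribution a (2 * a * n) := by
  choose q hq hmarg using h
  have hb : (Finset.range (2 * a)).Nonempty := ⟨0, Finset.mem_range.2 (by omega)⟩
  refine ⟨(PMF.uniformOfFinset _ hb).bind fun s => (q s).map (S.deletedSet (2 * a) s),
    fun X hX => ?_, fun v => ?_⟩
  · simp only [PMF.mem_support_bind_iff, PMF.mem_support_uniformOfFinset_iff,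
      PMF.mem_support_map_iff] at hX
    obtain ⟨s, hs, Y, hY, rfl⟩ := hX
    obtain ⟨le', hle'⟩ := hq s Y hY
    exact ⟨_, isGuidedForestOrder_liftOrder (Finset.mem_range.1 hs) hle'⟩
  rw [PMF.toOuterMeasure_bind_uniformOfFinset_apply, Finset.card_range]
  simp only [PMF.toOuterMeasure_map_apply]
  calc ((2 * a : ℕ) : ℝ≥0∞)⁻¹ * ∑ s ∈ Finset.range (2 * a),
        (q s).toOuterMeasure (S.deletedSet (2 * a) s ⁻¹' {X | v ∈ X})
      ≤ ((2 * a : ℕ) : ℝ≥0∞)⁻¹ * 2 := by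
        gcongr
        exact S.sum_toOuterMeasure_deletedSet_le (by omega) hmarg v
    _ = (a : ℝ≥0∞)⁻¹ := by
        push_cast
        rw [ENNReal.mul_inv (Or.inl two_ne_zero) (Or.inl ENNReal.ofNat_ne_top), mul_right_comm,
          ENNReal.inv_mul_cancel two_ne_zero ENNReal.ofNat_ne_top, one_mul]

theorem hasFragileDistribution : ∀ (t : ℕ) {W : Type} [Finite W] {G : SimpleGraph W}
    (S : GuidedDecomp G t) {a : ℕ}, 0 < a → S.HasFragileDistribution a (fragilityRate t a)
  | 0, _, _, _, S, a, _ => S.hasFragileDistribution_zero a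
  | t + 1, _, _, _, S, a, ha => S.hasFragileDistribution_succ ha fun s =>
      hasFragileDistribution t (S.contract (2 * a) s) (by omega)

end Distribution

end GuidedDecomp

lemma RootedDecomp.exists_guidedDecomp {W : Type} [Finite W] {G : SimpleGraph W} {t : ℕ}
    (D : RootedDecomp G t) : Nonempty (GuidedDecomp G t) := by
  obtain ⟨g, hinj, hmono⟩ := exists_injective_le_imp_le fun v => D.T.depth (D.top v)
  exact ⟨{ D := D
           R := fun u v => g u ≤ g v
           rank := g
           R_trans := fun _ _ _ => le_trans
           R_chain := fun _ _ _ _ _ => le_total _ _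
           R_total_of_mem_bag := fun _ _ _ _ _ => le_total _ _
           depth_top_le_of_R := hmono
           rank_lt_of_R := fun _ _ h hne => h.lt_of_ne (hinj.ne hne) }⟩

end TdFragile

/-- The class of graphs of treewidth at most `t` is fractionally td-fragile at
rate `r a = 2^(t(t+1)/2 + 1) · a^t`: for every such graph `G` and positive
integer `a` there is a probability distribution on vertex subsets `X`, with
each vertex in `X` with probability at most `1/a`, such that
`td(G − X) ≤ 2^(t(t+1)/2+1) a^t` always. -/
theorem treewidth_td_fragile (t : ℕ) {V : Type} [Fintype V] [DecidableEq V]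
    (G : SimpleGraph V) (htw : TreewidthLE G t) (a : ℕ) (ha : 0 < a) :
    ∃ P : Finset V → ℝ,
      (∀ X, 0 ≤ P X) ∧ (∑ X : Finset V, P X = 1) ∧
      (∀ X : Finset V, P X ≠ 0 →
        treedepth (G.induce (↑(Xᶜ) : Set V)) ≤ 2 ^ (t * (t + 1) / 2 + 1) * a ^ t) ∧
      (∀ v : V, ∑ X ∈ Finset.univ.filter (fun X : Finset V => v ∈ X), P X ≤ 1 / (a : ℝ)) := by
  obtain ⟨D⟩ := TdFragile.exists_rootedDecomp htw
  obtain ⟨S⟩ := D.exists_guidedDecomp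
  obtain ⟨p, hp, hmarg⟩ := TdFragile.GuidedDecomp.hasFragileDistribution t S ha
  refine ⟨fun X => (p X).toReal, fun X => ENNReal.toReal_nonneg, p.sum_toReal_eq_one,
    fun X hX => ?_, fun v => ?_⟩
  · obtain ⟨le, hle⟩ := hp X fun h => hX (by simp [h])
    exact (Nat.sInf_le hle.treedepthLE).trans (TdFragile.fragilityRate_le t a)
  · rw [p.sum_filter_toReal, one_div, ← ENNReal.toReal_natCast, ← ENNReal.toReal_inv]
    exact ENNReal.toReal_mono (by simp; omega) (hmarg v)
end

section
/- Let r : ℕ → ℝ≥0 be non-decreasing and define r'(a) = r(a+1). Let f be a graph parameter whose value on the empty graph is at most r(1). A class 𝒢 of graphs is fractionally f-fragile at rate r if and only if it is fractionally f-colorable by 1 color at rate r'; i.e., for every positive integer a and every G ∈ 𝒢, there exists a fractional (f, r'(a))-coloring of G using at most 1 + 1/a colors. -/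
/-!
Fragility and one-colour fractional colourability are two descriptions of the same object,
related by complementation. If `P` is a distribution on deleted sets `X` in which each vertex
is deleted with probability at most `1/(a+1)`, then `κ Y = (1 + 1/a) P (V ∖ Y)` (capped at `1`)
covers each vertex with weight at least `(1 + 1/a)(1 - 1/(a+1)) = 1`, at total cost `1 + 1/a`.
Conversely, a colouring `κ` of total weight `S ≤ 1 + 1/a` normalises to the distribution
`P X = κ (V ∖ X) / S`, which deletes each vertex with probability at most `(S - 1)/S ≤ 1/(a+1)`.
The case `a = 1` of fragility is covered by deleting every vertex, which is allowed because
`f` of the empty graph is at most `r 1`.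
-/

/-- A graph parameter: a real-valued function on finite graphs. -/
abbrev GraphParam := ∀ (V : Type) [Fintype V], SimpleGraph V → ℝ

/-- `G` is fractionally `f`-fragile at rate `r`: for every positive integer `a`
there is a `(1/a)`-thin probability distribution on subsets `X` of `V(G)`
supported on sets with `f (G - X) ≤ r a`. -/
def FracFragile (f : GraphParam) {V : Type} [Fintype V] [DecidableEq V]
    (G : SimpleGraph V) (r : ℕ → ℝ) : Prop :=
  ∀ a : ℕ, 0 < a → ∃ P : Finset V → ℝ,
    (∀ X, 0 ≤ P X) ∧ (∑ X : Finset V, P X = 1) ∧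
    (∀ X : Finset V, P X ≠ 0 → f _ (G.induce (↑(Xᶜ) : Set V)) ≤ r a) ∧
    (∀ v : V, ∑ X ∈ Finset.univ.filter (fun X : Finset V => v ∈ X), P X ≤ 1 / (a : ℝ))

/-- A graph parameter is invariant under isomorphism. -/
def IsoInvariant (f : GraphParam) : Prop :=
  ∀ {V W : Type} [Fintype V] [Fintype W] (G : SimpleGraph V) (H : SimpleGraph W),
    Nonempty (G ≃g H) → f _ G = f _ H

/-- `κ` is a fractional `(f, b)`-coloring of `G`: a `[0,1]`-valued function on
the subsets `Y` of `V(G)` supported on sets with `f (G[Y]) ≤ b`, such that each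
vertex receives total value at least `1`. -/
def IsFracColoring (f : GraphParam) {V : Type} [Fintype V] [DecidableEq V]
    (G : SimpleGraph V) (b : ℝ) (κ : Finset V → ℝ) : Prop :=
  (∀ Y, 0 ≤ κ Y ∧ κ Y ≤ 1) ∧
  (∀ Y : Finset V, κ Y ≠ 0 → f _ (G.induce (↑Y : Set V)) ≤ b) ∧
  (∀ v : V, 1 ≤ ∑ Y ∈ Finset.univ.filter (fun Y : Finset V => v ∈ Y), κ Y)

open Finset

def IsDeletionDistribution (f : GraphParam) {V : Type} [Fintype V] [DecidableEq V]
    (G : SimpleGraph V) (b p : ℝ) (P : Finset V → ℝ) : Prop :=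
  (∀ X, 0 ≤ P X) ∧ (∑ X : Finset V, P X = 1) ∧
    (∀ X : Finset V, P X ≠ 0 → f _ (G.induce (↑(Xᶜ) : Set V)) ≤ b) ∧
    (∀ v : V, ∑ X ∈ univ.filter (fun X : Finset V => v ∈ X), P X ≤ p)

theorem fracFragile_iff {f : GraphParam} {V : Type} [Fintype V] [DecidableEq V]
    {G : SimpleGraph V} {r : ℕ → ℝ} :
    FracFragile f G r ↔ ∀ a : ℕ, 0 < a → ∃ P, IsDeletionDistribution f G (r a) (1 / a) P :=
  Iff.rfl

theorem min_one_sum_le_sum_min_one {ι : Type*} (s : Finset ι) (g : ι → ℝ)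
    (hg : ∀ i ∈ s, 0 ≤ g i) : min 1 (∑ i ∈ s, g i) ≤ ∑ i ∈ s, min 1 (g i) :=
  Finset.le_sum_of_subadditive_on_pred (fun x : ℝ => min 1 x) (0 ≤ ·) (by simp)
    (fun x y hx hy => by grind)
    (fun _ _ => add_nonneg) g hg

section ComplementSums

variable {V : Type} [Fintype V] [DecidableEq V]

theorem sum_compl_finset (g : Finset V → ℝ) : ∑ X : Finset V, g Xᶜ = ∑ X : Finset V, g X :=
  Fintype.sum_bijective compl compl_involutive.bijective _ _ fun _ => rfl

theorem sum_filter_mem_compl (g : Finset V → ℝ) (v : V) :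
    ∑ X ∈ univ.filter (fun X : Finset V => v ∈ X), g Xᶜ
      = ∑ X : Finset V, g X - ∑ X ∈ univ.filter (fun X : Finset V => v ∈ X), g X := by
  have hcompl : ∑ X ∈ univ.filter (fun X : Finset V => v ∈ X), g Xᶜ
      = ∑ X ∈ univ.filter (fun X : Finset V => v ∉ X), g X :=
    Finset.sum_nbij' compl compl (by simp) (by simp) (by simp) (by simp) (by simp)
  rw [hcompl, ← Finset.sum_filter_add_sum_filter_not univ (fun X : Finset V => v ∈ X) g]
  ring

end ComplementSums

theorem IsoInvariant.apply_induce_of_isEmpty {f : GraphParam} (hiso : IsoInvariant f)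
    {V : Type} [Fintype V] (G : SimpleGraph V) (s : Set V) [Fintype s] [IsEmpty s] :
    f _ (G.induce s) = f Empty ⊥ :=
  hiso _ _ ⟨⟨Equiv.equivEmpty s, fun {a} => isEmptyElim a⟩⟩

section Duality

variable {f : GraphParam} {V : Type} [Fintype V] [DecidableEq V] {G : SimpleGraph V} {b : ℝ}

theorem isDeletionDistribution_single_univ {p : ℝ}
    (hb : f _ (G.induce (↑((univ : Finset V)ᶜ) : Set V)) ≤ b) (hp : IsEmpty V ∨ 1 ≤ p) :
    IsDeletionDistribution f G b p (Pi.single univ 1) := by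
  refine ⟨fun X => ?_, by simp, fun X hX => ?_, fun v => ?_⟩
  · by_cases hX : X = univ <;> simp [hX]
  · obtain rfl : X = univ := by by_contra h; simp [h] at hX
    exact hb
  · rcases hp with hV | hp
    · exact isEmptyElim v
    · simpa [Pi.single_apply] using hp

theorem exists_fracColoring_of_isDeletionDistribution {t : ℝ} (ht : 0 < t)
    {P : Finset V → ℝ} (hP : IsDeletionDistribution f G b (1 / (t + 1)) P) :
    ∃ κ : Finset V → ℝ, IsFracColoring f G b κ ∧ ∑ Y : Finset V, κ Y ≤ 1 + 1 / t := by
  obtain ⟨hP_nonneg, hP_sum, hP_supp, hP_thin⟩ := hP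
  set c : ℝ := 1 + 1 / t
  have hc : 0 ≤ c := by positivity
  have hcP : ∀ Y, 0 ≤ c * P Yᶜ := fun Y => mul_nonneg hc (hP_nonneg _)
  refine ⟨fun Y => min 1 (c * P Yᶜ),
    ⟨fun Y => ⟨le_min zero_le_one (hcP Y), min_le_left _ _⟩, fun Y hY => ?_, fun v => ?_⟩, ?_⟩
  · have hPY : P Yᶜ ≠ 0 := fun h => hY (by simp [h])
    have h := hP_supp Yᶜ hPY
    rwa [compl_compl] at h
  · have hcover : 1 ≤ ∑ Y ∈ univ.filter (fun Y : Finset V => v ∈ Y), c * P Yᶜ := by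
      rw [← Finset.mul_sum, sum_filter_mem_compl, hP_sum]
      have hv := hP_thin v
      calc (1 : ℝ) = (1 + 1 / t) * (1 - 1 / (t + 1)) := by field_simp; ring
        _ ≤ _ := by gcongr
    calc (1 : ℝ) = min 1 (∑ Y ∈ univ.filter (fun Y : Finset V => v ∈ Y), c * P Yᶜ) :=
          (min_eq_left hcover).symm
      _ ≤ _ := min_one_sum_le_sum_min_one _ _ fun Y _ => hcP Y
  · calc ∑ Y : Finset V, min 1 (c * P Yᶜ) ≤ ∑ Y : Finset V, c * P Yᶜ :=
          Finset.sum_le_sum fun Y _ => min_le_right _ _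
      _ = c := by rw [← Finset.mul_sum, sum_compl_finset, hP_sum, mul_one]

theorem exists_isDeletionDistribution_of_fracColoring [Nonempty V] {t : ℝ} (ht : 0 < t)
    {κ : Finset V → ℝ} (hκ : IsFracColoring f G b κ) (htotal : ∑ Y : Finset V, κ Y ≤ 1 + 1 / t) :
    ∃ P : Finset V → ℝ, IsDeletionDistribution f G b (1 / (t + 1)) P := by
  obtain ⟨hκ_unit, hκ_supp, hκ_cover⟩ := hκ
  set S := ∑ Y : Finset V, κ Y
  have hS : 1 ≤ S := by
    obtain ⟨v⟩ := ‹Nonempty V›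
    exact (hκ_cover v).trans
      (Finset.sum_le_sum_of_subset_of_nonneg (filter_subset _ _) fun Y _ _ => (hκ_unit Y).1)
  have hS_pos : 0 < S := by linarith
  refine ⟨fun X => κ Xᶜ / S, fun X => div_nonneg (hκ_unit _).1 hS_pos.le, ?_,
    fun X hX => hκ_supp Xᶜ fun h => hX (by simp [h]), fun v => ?_⟩
  · rw [← Finset.sum_div, sum_compl_finset, div_self hS_pos.ne']
  · rw [← Finset.sum_div, sum_filter_mem_compl, div_le_div_iff₀ hS_pos (by linarith)]
    have hcover := hκ_cover v
    have hSt : S * t ≤ t + 1 := by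
      calc S * t ≤ (1 + 1 / t) * t := by gcongr
        _ = t + 1 := by field_simp
    nlinarith

end Duality

/-- Let `r` be non-decreasing, `r' a = r (a+1)`, and let `f` be a graph
parameter whose value on the empty graph is at most `r 1`.  A class `𝒢` of
graphs is fractionally `f`-fragile at rate `r` iff it is fractionally
`f`-colorable by one color at rate `r'`, i.e. every `G ∈ 𝒢` has, for every
positive integer `a`, a fractional `(f, r' a)`-coloring using at most `1 + 1/a`
colors. -/
theorem frac_fragile_iff_frac_colorable (f : GraphParam) (hiso : IsoInvariant f)
    (r : ℕ → ℝ) (hr : Monotone r)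
    (hempty : f Empty (⊥ : SimpleGraph Empty) ≤ r 1)
    (𝒢 : ∀ (V : Type) [Fintype V] [DecidableEq V], SimpleGraph V → Prop) :
    (∀ (V : Type) [Fintype V] [DecidableEq V] (G : SimpleGraph V),
        𝒢 V G → FracFragile f G r) ↔
    (∀ (V : Type) [Fintype V] [DecidableEq V] (G : SimpleGraph V),
        𝒢 V G → ∀ a : ℕ, 0 < a → ∃ κ : Finset V → ℝ,
          IsFracColoring f G (r (a + 1)) κ ∧
          ∑ Y : Finset V, κ Y ≤ 1 + 1 / (a : ℝ)) := by
  simp only [fracFragile_iff]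
  constructor
  · intro hfrag V _ _ G hG a ha
    obtain ⟨P, hP⟩ := hfrag V G hG (a + 1) a.succ_pos
    rw [Nat.cast_succ] at hP
    exact exists_fracColoring_of_isDeletionDistribution (Nat.cast_pos.mpr ha) hP
  · intro hcol V _ _ G hG a ha
    by_cases htrivial : IsEmpty V ∨ a = 1
    · refine ⟨Pi.single univ 1, isDeletionDistribution_single_univ ?_ ?_⟩
      · have : IsEmpty (↑((univ : Finset V)ᶜ) : Set V) := by simp
        rw [hiso.apply_induce_of_isEmpty]
        exact hempty.trans (hr ha)
      · exact htrivial.imp_right fun h => by simp [h]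
    · obtain ⟨hV, ha1⟩ := not_or.mp htrivial
      have : Nonempty V := not_isEmpty_iff.mp hV
      obtain ⟨b, rfl⟩ : ∃ b, a = b + 1 := ⟨a - 1, by omega⟩
      obtain ⟨κ, hκ, htotal⟩ := hcol V G hG b (by omega)
      simpa only [Nat.cast_succ] using
        exists_isDeletionDistribution_of_fracColoring (Nat.cast_pos.mpr (by omega)) hκ htotal
end
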